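/- arXiv:1401.2471 — 3 statements merged into one kernel-verified Lean document; each statement's English description precedes it below -/
import Mathlib

section
/- Let n, m : ℕ and let α : Fin n → ℤ, β : Fin n → Fin m → ℤ, γ : Fin n → Fin m → Fin m → ℤ. Then the following are equivalent: (i) there exist y, y' : Fin m → H such that for all j, ⁅a, y j⁆ = 1, ⁅b, y' j⁆ = 1, and ⁅b, y j⁆ = ⁅y' j, a⁆, and for all i, ⁅a,b⁆^(α i) · ∏_j ⁅a, y' j⁆^(β i j) · ∏_{j,k} ⁅y j, y' k⁆^(γ i j k) = 1 (all of these commutator factors are central in H, so the order of the products is immaterial); (ii) there exists x : Fin m → ℤ such that for all i, α i + ∑_j (β i j) * x j + ∑_{j,k} (γ i j k) * x j * x k = 0. -/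
/-- The 3×3 upper unitriangular integer matrix with off-diagonal entries x, y, z. -/
def heisMat (x y z : ℤ) : Matrix (Fin 3) (Fin 3) ℤ := !![1, x, z; 0, 1, y; 0, 0, 1]

lemma heisMat_mul (x y z x' y' z' : ℤ) :
    heisMat x y z * heisMat x' y' z' = heisMat (x + x') (y + y') (z + z' + x * y') := by
  ext i j
  fin_cases i <;> fin_cases j <;>
    simp [heisMat, Matrix.mul_apply, Fin.sum_univ_three, Matrix.vecHead, Matrix.vecTail] <;> ring

lemma heisMat_zero : heisMat 0 0 0 = 1 := by
  ext i j
  fin_cases i <;> fin_cases j <;>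
    simp [heisMat, Matrix.one_apply, Matrix.vecHead, Matrix.vecTail]

/-- A 3×3 matrix is upper unitriangular iff it is `heisMat x y z` for some x, y, z. -/
lemma isUnitriangular_iff (M : Matrix (Fin 3) (Fin 3) ℤ) :
    ((∀ i, M i i = 1) ∧ ∀ i j : Fin 3, j < i → M i j = 0) ↔
      ∃ x y z : ℤ, M = heisMat x y z := by
  constructor
  · rintro ⟨h1, h2⟩
    refine ⟨M 0 1, M 1 2, M 0 2, ?_⟩
    ext i j
    fin_cases i <;> fin_cases j <;>
      first
        | rfl
        | exact h1 _
        | exact h2 _ _ (by decide)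
  · rintro ⟨x, y, z, rfl⟩
    constructor
    · intro i; fin_cases i <;> rfl
    · intro i j h; fin_cases i <;> fin_cases j <;> first | rfl | exact absurd h (by decide)

/-- The set of 3×3 upper unitriangular integer matrices, as a multiplicative submonoid
of the matrix ring. -/
def Heisenberg : Submonoid (Matrix (Fin 3) (Fin 3) ℤ) where
  carrier := {M | (∀ i, M i i = 1) ∧ ∀ i j : Fin 3, j < i → M i j = 0}
  one_mem' := (isUnitriangular_iff 1).2 ⟨0, 0, 0, heisMat_zero.symm⟩
  mul_mem' := by
    intro M N hM hN
    obtain ⟨x, y, z, rfl⟩ := (isUnitriangular_iff M).1 hM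
    obtain ⟨x', y', z', rfl⟩ := (isUnitriangular_iff N).1 hN
    exact (isUnitriangular_iff _).2 ⟨_, _, _, heisMat_mul ..⟩

lemma heisMat_mem (x y z : ℤ) : heisMat x y z ∈ Heisenberg :=
  (isUnitriangular_iff _).2 ⟨x, y, z, rfl⟩

/-- The integer Heisenberg group: the group of 3×3 upper unitriangular matrices over ℤ. -/
instance : Group Heisenberg where
  inv M := ⟨heisMat (-(M.1 0 1)) (-(M.1 1 2)) ((M.1 0 1) * (M.1 1 2) - M.1 0 2),
    heisMat_mem _ _ _⟩
  inv_mul_cancel := by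
    rintro ⟨M, hM⟩
    obtain ⟨x, y, z, rfl⟩ := (isUnitriangular_iff M).1 hM
    apply Subtype.ext
    show heisMat (-x) (-y) (x * y - z) * heisMat x y z = 1
    rw [heisMat_mul, show -x + x = 0 by ring, show -y + y = 0 by ring,
      show x * y - z + z + -x * y = 0 by ring]
    exact heisMat_zero

/-- The generator `a` of the Heisenberg group (entry 1 in position (1,2)). -/
def heisA : Heisenberg := ⟨heisMat 1 0 0, heisMat_mem 1 0 0⟩
/-- The generator `b` of the Heisenberg group (entry 1 in position (2,3)). -/
def heisB : Heisenberg := ⟨heisMat 0 1 0, heisMat_mem 0 1 0⟩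

open scoped commutatorElement


/-- Generic element of the Heisenberg group. -/
def heisMk (p q r : ℤ) : Heisenberg := ⟨heisMat p q r, heisMat_mem p q r⟩

/-- Central element. -/
def hz (z : ℤ) : Heisenberg := heisMk 0 0 z

lemma heisMat_ext (A B C A' B' C' : ℤ) (h1 : A = A') (h2 : B = B') (h3 : C = C') :
    heisMat A B C = heisMat A' B' C' := by rw [h1, h2, h3]

lemma hz_mul (z w : ℤ) : hz z * hz w = hz (z + w) := by
  apply Subtype.ext
  show heisMat 0 0 z * heisMat 0 0 w = heisMat 0 0 (z + w)
  rw [heisMat_mul]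
  exact heisMat_ext _ _ _ _ _ _ (by ring) (by ring) (by ring)

lemma hz_zero : hz 0 = 1 := Subtype.ext heisMat_zero

lemma hz_inv (z : ℤ) : (hz z)⁻¹ = hz (-z) :=
  inv_eq_of_mul_eq_one_right (by rw [hz_mul, add_neg_cancel, hz_zero])

lemma hz_zpow (z n : ℤ) : hz z ^ n = hz (n * z) := by
  induction n using Int.induction_on with
  | zero => simp [hz_zero]
  | succ k ih => rw [zpow_add_one, ih, hz_mul]; congr 1; ring
  | pred k ih => rw [zpow_sub_one, ih, hz_inv, hz_mul]; congr 1; ring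

lemma hz_inj {z w : ℤ} (h : hz z = hz w) : z = w := by
  have := congrArg (fun M => M.1 0 2) h
  simpa [hz, heisMk, heisMat] using this

lemma hz_eq_one_iff {z : ℤ} : hz z = 1 ↔ z = 0 :=
  ⟨fun h => hz_inj (h.trans hz_zero.symm), fun h => h ▸ hz_zero⟩

lemma heisMk_comm (p q r p' q' r' : ℤ) :
    ⁅heisMk p q r, heisMk p' q' r'⁆ = hz (p * q' - p' * q) := by
  have key : heisMk p q r * heisMk p' q' r' =
      hz (p * q' - p' * q) * (heisMk p' q' r' * heisMk p q r) := by
    apply Subtype.ext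
    show heisMat p q r * heisMat p' q' r' =
      heisMat 0 0 (p * q' - p' * q) * (heisMat p' q' r' * heisMat p q r)
    simp only [heisMat_mul]
    exact heisMat_ext _ _ _ _ _ _ (by ring) (by ring) (by ring)
  rw [commutatorElement_def, key]
  group

lemma prod_hz : ∀ {k : ℕ} (f : Fin k → ℤ),
    (List.ofFn fun j => hz (f j)).prod = hz (∑ j, f j) := by
  intro k
  induction k with
  | zero => intro f; simp [hz_zero]
  | succ k ih =>
    intro f
    rw [List.ofFn_succ, List.prod_cons, ih, hz_mul, Fin.sum_univ_succ]

lemma heisA_eq : heisA = heisMk 1 0 0 := rfl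
lemma heisB_eq : heisB = heisMk 0 1 0 := rfl

lemma big_eq {m : ℕ} (ai : ℤ) (bi : Fin m → ℤ) (gi : Fin m → Fin m → ℤ)
    (x r r' : Fin m → ℤ) :
    ⁅heisA, heisB⁆ ^ ai *
      (List.ofFn fun j => ⁅heisA, heisMk 0 (x j) (r' j)⁆ ^ (bi j)).prod *
      (List.ofFn fun j =>
        (List.ofFn fun k => ⁅heisMk (x j) 0 (r j), heisMk 0 (x k) (r' k)⁆ ^ (gi j k)).prod).prod
    = hz (ai + (∑ j, bi j * x j) + ∑ j, ∑ k, gi j k * (x j * x k)) := by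
  rw [heisA_eq, heisB_eq]
  simp only [heisMk_comm, mul_one, one_mul, mul_zero, zero_mul, sub_zero, hz_zpow,
    prod_hz, hz_mul]


/-- The system of group equations in the Heisenberg group encoding an arbitrary finite system
of quadratic diophantine equations is solvable iff the diophantine system is.  (All the listed
commutator factors are central in the Heisenberg group, so the order of the products below is
immaterial; we fix the order given by increasing indices.) -/
theorem heisenberg_system_encodes_quadratic_system
    (n m : ℕ) (α : Fin n → ℤ) (β : Fin n → Fin m → ℤ) (γ : Fin n → Fin m → Fin m → ℤ) :
    (∃ y y' : Fin m → Heisenberg,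
      (∀ j, ⁅heisA, y j⁆ = 1 ∧ ⁅heisB, y' j⁆ = 1 ∧ ⁅heisB, y j⁆ = ⁅y' j, heisA⁆) ∧
      (∀ i, ⁅heisA, heisB⁆ ^ (α i) *
        (List.ofFn fun j => ⁅heisA, y' j⁆ ^ (β i j)).prod *
        (List.ofFn fun j => (List.ofFn fun k => ⁅y j, y' k⁆ ^ (γ i j k)).prod).prod = 1))
    ↔ (∃ x : Fin m → ℤ,
        ∀ i, α i + (∑ j, β i j * x j) + (∑ j, ∑ k, γ i j k * x j * x k) = 0) := by
  constructor
  · rintro ⟨y, y', h1, h2⟩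
    choose p q r hy using fun j => (isUnitriangular_iff ((y j).1)).1 (y j).2
    choose p' q' r' hy' using fun j => (isUnitriangular_iff ((y' j).1)).1 (y' j).2
    have hyj : ∀ j, y j = heisMk (p j) (q j) (r j) := fun j => Subtype.ext (hy j)
    have hy'j : ∀ j, y' j = heisMk (p' j) (q' j) (r' j) := fun j => Subtype.ext (hy' j)
    have hq : ∀ j, q j = 0 := by
      intro j
      have := (h1 j).1
      rw [hyj j, heisA_eq, heisMk_comm] at this
      have := hz_eq_one_iff.1 this
      linarith
    have hp' : ∀ j, p' j = 0 := by
      intro j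
      have := (h1 j).2.1
      rw [hy'j j, heisB_eq, heisMk_comm] at this
      have := hz_eq_one_iff.1 this
      linarith
    have hq' : ∀ j, q' j = p j := by
      intro j
      have := (h1 j).2.2
      rw [hyj j, hy'j j, heisB_eq, heisA_eq, heisMk_comm, heisMk_comm] at this
      have := hz_inj this
      linarith
    refine ⟨p, fun i => ?_⟩
    have heq := h2 i
    have hyj' : ∀ j, y j = heisMk (p j) 0 (r j) := by
      intro j; rw [hyj j, hq j]
    have hy'j' : ∀ j, y' j = heisMk 0 (p j) (r' j) := by
      intro j; rw [hy'j j, hp' j, hq' j]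
    simp only [funext hyj', funext hy'j'] at heq
    rw [big_eq] at heq
    have := hz_eq_one_iff.1 heq
    calc α i + (∑ j, β i j * p j) + ∑ j, ∑ k, γ i j k * p j * p k
        = α i + (∑ j, β i j * p j) + ∑ j, ∑ k, γ i j k * (p j * p k) := by
          simp only [mul_assoc]
      _ = 0 := this
  · rintro ⟨x, hx⟩
    refine ⟨fun j => heisMk (x j) 0 0, fun j => heisMk 0 (x j) 0, fun j => ?_, fun i => ?_⟩
    · refine ⟨?_, ?_, ?_⟩ <;>
        simp [heisA_eq, heisB_eq, heisMk_comm, hz_eq_one_iff]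
    · rw [big_eq, hz_eq_one_iff]
      calc α i + (∑ j, β i j * x j) + ∑ j, ∑ k, γ i j k * (x j * x k)
          = α i + (∑ j, β i j * x j) + ∑ j, ∑ k, γ i j k * x j * x k := by
            simp only [mul_assoc]
        _ = 0 := hx i
end

section
/- Let q ≥ 2, let G = N(2,q) be the free nilpotent group of class 2 and rank q with generators a_1,…,a_q, and write a = a_1, b = a_2. Let n, m : ℕ and let α : Fin n → ℤ, β : Fin n → Fin m → ℤ, γ : Fin n → Fin m → Fin m → ℤ. Then the following are equivalent: (i) there exist y, y' : Fin m → G such that for all j, ⁅a, y j⁆ = 1, ⁅b, y' j⁆ = 1, and ⁅b, y j⁆ = ⁅y' j, a⁆, and for all i, ⁅a,b⁆^(α i) · ∏_j ⁅a, y' j⁆^(β i j) · ∏_{j,k} ⁅y j, y' k⁆^(γ i j k) = 1 (all of these commutator factors lie in the central commutator subgroup of G, so the order of the products is immaterial); (ii) there exists x : Fin m → ℤ such that for all i, α i + ∑_j (β i j) * x j + ∑_{j,k} (γ i j k) * x j * x k = 0. -/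
/-- The free nilpotent group `N(p,q)` of class `p` and rank `q`: the quotient of the free
group on `q` generators by the `p`-th term of its lower central series. -/
def FreeNilpotent (p q : ℕ) : Type :=
  FreeGroup (Fin q) ⧸ Subgroup.lowerCentralSeries (⊤ : Subgroup (FreeGroup (Fin q))) p

instance (p q : ℕ) : Group (FreeNilpotent p q) :=
  QuotientGroup.Quotient.group _

/-- The images `a_1, …, a_q` in `N(p,q)` of the free generators `e_1, …, e_q`. -/
def FreeNilpotent.gen (p q : ℕ) (i : Fin q) : FreeNilpotent p q :=
  QuotientGroup.mk (FreeGroup.of i)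

open scoped commutatorElement

/-- Integer Heisenberg group as ℤ³ with twisted multiplication. -/
def Heis : Type := ℤ × ℤ × ℤ

namespace Heis

/-- Build an element of `Heis`. -/
def mk (a b c : ℤ) : Heis := (a, b, c)
def x1 (u : Heis) : ℤ := u.1
def x2 (u : Heis) : ℤ := u.2.1
def x3 (u : Heis) : ℤ := u.2.2

@[simp] lemma x1_mk (a b c : ℤ) : x1 (mk a b c) = a := rfl
@[simp] lemma x2_mk (a b c : ℤ) : x2 (mk a b c) = b := rfl
@[simp] lemma x3_mk (a b c : ℤ) : x3 (mk a b c) = c := rfl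

lemma ext3 {u v : Heis} (h1 : x1 u = x1 v) (h2 : x2 u = x2 v) (h3 : x3 u = x3 v) :
    u = v := Prod.ext h1 (Prod.ext h2 h3)

instance : One Heis := ⟨mk 0 0 0⟩
instance : Mul Heis := ⟨fun u v => mk (x1 u + x1 v) (x2 u + x2 v) (x3 u + x3 v + x1 u * x2 v)⟩
instance : Inv Heis := ⟨fun u => mk (-x1 u) (-x2 u) (-x3 u + x1 u * x2 u)⟩

@[simp] lemma x1_mul (u v : Heis) : x1 (u * v) = x1 u + x1 v := rfl
@[simp] lemma x2_mul (u v : Heis) : x2 (u * v) = x2 u + x2 v := rfl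
@[simp] lemma x3_mul (u v : Heis) : x3 (u * v) = x3 u + x3 v + x1 u * x2 v := rfl
@[simp] lemma x1_inv (u : Heis) : x1 u⁻¹ = -x1 u := rfl
@[simp] lemma x2_inv (u : Heis) : x2 u⁻¹ = -x2 u := rfl
@[simp] lemma x3_inv (u : Heis) : x3 u⁻¹ = -x3 u + x1 u * x2 u := rfl
@[simp] lemma x1_one : x1 1 = 0 := rfl
@[simp] lemma x2_one : x2 1 = 0 := rfl
@[simp] lemma x3_one : x3 1 = 0 := rfl

instance : Group Heis where
  mul_assoc u v w := ext3 (by simp; ring) (by simp; ring) (by simp; ring)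
  one_mul u := ext3 (by simp) (by simp) (by simp)
  mul_one u := ext3 (by simp) (by simp) (by simp)
  inv_mul_cancel u := ext3 (by simp) (by simp) (by simp)

lemma comm_def (u v : Heis) :
    ⁅u, v⁆ = mk 0 0 (x1 u * x2 v - x1 v * x2 u) := by
  rw [commutatorElement_def]
  exact ext3 (by simp) (by simp) (by simp; ring)

/-- The central embedding of ℤ. -/
def zeta : Multiplicative ℤ →* Heis where
  toFun t := mk 0 0 t.toAdd
  map_one' := by exact ext3 (by simp) (by simp) (by simp)
  map_mul' u v := by exact ext3 (by simp) (by simp) (by simp [toAdd_mul])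

lemma zeta_zpow (t e : ℤ) : (mk 0 0 t) ^ e = mk 0 0 (e * t) := by
  have h : (mk 0 0 t : Heis) = zeta (Multiplicative.ofAdd t) := rfl
  rw [h, ← map_zpow]
  have : (Multiplicative.ofAdd t) ^ e = Multiplicative.ofAdd (e * t) := by
    rw [← Multiplicative.toAdd.injective.eq_iff, toAdd_zpow]
    simp [smul_eq_mul, mul_comm]
  rw [this]; rfl

lemma central_of (t : ℤ) (u : Heis) : Commute (mk 0 0 t) u := by
  unfold Commute SemiconjBy
  exact ext3 (by simp) (by simp) (by simp; ring)

lemma lcs_two : Subgroup.lowerCentralSeries (⊤ : Subgroup Heis) 2 = ⊥ := by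
  have h1 : Subgroup.lowerCentralSeries (⊤ : Subgroup Heis) 1 ≤ Subgroup.center Heis := by
    rw [Subgroup.top_lowerCentralSeries_one, commutator_def]
    apply Subgroup.commutator_le.mpr
    intro g _ h _
    rw [Subgroup.mem_center_iff]
    intro u
    rw [comm_def]
    exact (central_of _ u).symm
  rw [eq_bot_iff, Subgroup.lowerCentralSeries_succ]
  apply Subgroup.commutator_le.mpr
  intro g hg h _
  rw [Subgroup.mem_bot, commutatorElement_eq_one_iff_commute]
  exact (Subgroup.mem_center_iff.mp (h1 hg) h).symm

end Heis

section CommCalc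

variable {G : Type*} [Group G]

/-- If `⁅g,h⁆` commutes with `h`, then `⁅g, h^n⁆ = ⁅g,h⁆^n`. -/
lemma commutator_zpow_right (g h : G) (H : Commute ⁅g, h⁆ h) (n : ℤ) :
    ⁅g, h ^ n⁆ = ⁅g, h⁆ ^ n := by
  have key : g * h * g⁻¹ = ⁅g, h⁆ * h := by group
  calc ⁅g, h ^ n⁆ = g * h ^ n * g⁻¹ * (h ^ n)⁻¹ := commutatorElement_def _ _
    _ = (g * h * g⁻¹) ^ n * (h ^ n)⁻¹ := by rw [conj_zpow]
    _ = (⁅g, h⁆ * h) ^ n * (h ^ n)⁻¹ := by rw [key]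
    _ = ⁅g, h⁆ ^ n * h ^ n * (h ^ n)⁻¹ := by rw [H.mul_zpow]
    _ = ⁅g, h⁆ ^ n := by group

lemma commutator_zpow_left (g h : G) (H : Commute ⁅h, g⁆ g) (m : ℤ) :
    ⁅g ^ m, h⁆ = ⁅g, h⁆ ^ m := by
  rw [← commutatorElement_inv, commutator_zpow_right h g H m, ← inv_zpow,
    commutatorElement_inv]

lemma commutator_zpow_zpow (hc : ∀ x y z : G, Commute ⁅x, y⁆ z) (g h : G) (m n : ℤ) :
    ⁅g ^ m, h ^ n⁆ = ⁅g, h⁆ ^ (m * n) := by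
  rw [commutator_zpow_left _ _ (hc _ _ _), commutator_zpow_right _ _ (hc _ _ _),
    ← zpow_mul, mul_comm]

lemma prod_ofFn_zpow (c : G) : ∀ {k : ℕ} (e : Fin k → ℤ),
    (List.ofFn fun j => c ^ (e j)).prod = c ^ (∑ j, e j)
  | 0, e => by simp
  | Nat.succ k, e => by
    rw [List.ofFn_succ, List.prod_cons, prod_ofFn_zpow c (fun j => e j.succ),
      Fin.sum_univ_succ, zpow_add]

end CommCalc

namespace FreeNilpotent

lemma triple_comm (q : ℕ) (x y z : FreeNilpotent 2 q) : ⁅⁅x, y⁆, z⁆ = 1 := by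
  induction x using QuotientGroup.induction_on with | H a =>
  induction y using QuotientGroup.induction_on with | H b =>
  induction z using QuotientGroup.induction_on with | H c =>
  show (QuotientGroup.mk ⁅⁅a, b⁆, c⁆ : FreeNilpotent 2 q) = 1
  rw [QuotientGroup.eq_one_iff]
  exact Subgroup.commutator_mem_commutator
    (Subgroup.commutator_mem_commutator (Subgroup.mem_top a) (Subgroup.mem_top b))
    (Subgroup.mem_top c)

lemma comm_commute (q : ℕ) (x y z : FreeNilpotent 2 q) : Commute ⁅x, y⁆ z :=
  commutatorElement_eq_one_iff_commute.mp (triple_comm q x y z)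

/-- The lift of the free-group map sending generator 0 to `X`, generator 1 to `Y`. -/
def fXY (q : ℕ) : FreeGroup (Fin q) →* Heis :=
  FreeGroup.lift fun i => if (i : ℕ) = 0 then Heis.mk 1 0 0
    else if (i : ℕ) = 1 then Heis.mk 0 1 0 else 1

/-- The induced homomorphism `N(2,q) →* Heis`. -/
def phi (q : ℕ) : FreeNilpotent 2 q →* Heis :=
  QuotientGroup.lift _ (fXY q) (fun g hg => by
    rw [MonoidHom.mem_ker]
    have h1 : fXY q g ∈ Subgroup.map (fXY q) (Subgroup.lowerCentralSeries (⊤ : Subgroup (FreeGroup (Fin q))) 2) :=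
      ⟨g, hg, rfl⟩
    have h2 := lowerCentralSeries.map (fXY q) 2 h1
    rwa [Heis.lcs_two, Subgroup.mem_bot] at h2)

lemma phi_gen (q : ℕ) (i : Fin q) :
    phi q (gen 2 q i) = if (i : ℕ) = 0 then Heis.mk 1 0 0
      else if (i : ℕ) = 1 then Heis.mk 0 1 0 else 1 := by
  show QuotientGroup.lift _ (fXY q) _ (QuotientGroup.mk (FreeGroup.of i)) = _
  rw [QuotientGroup.lift_mk]
  simp [fXY]

end FreeNilpotent

open FreeNilpotent in
theorem main_aux (q : ℕ) (h0 : 0 < q) (h1 : 1 < q)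
    (n m : ℕ) (α : Fin n → ℤ) (β : Fin n → Fin m → ℤ) (γ : Fin n → Fin m → Fin m → ℤ) :
    (∃ y y' : Fin m → FreeNilpotent 2 q,
      (∀ j, ⁅FreeNilpotent.gen 2 q ⟨0, h0⟩, y j⁆ = 1 ∧
            ⁅FreeNilpotent.gen 2 q ⟨1, h1⟩, y' j⁆ = 1 ∧
            ⁅FreeNilpotent.gen 2 q ⟨1, h1⟩, y j⁆ =
              ⁅y' j, FreeNilpotent.gen 2 q ⟨0, h0⟩⁆) ∧
      (∀ i, ⁅FreeNilpotent.gen 2 q ⟨0, h0⟩, FreeNilpotent.gen 2 q ⟨1, h1⟩⁆ ^ (α i) *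
        (List.ofFn fun j => ⁅FreeNilpotent.gen 2 q ⟨0, h0⟩, y' j⁆ ^ (β i j)).prod *
        (List.ofFn fun j => (List.ofFn fun k => ⁅y j, y' k⁆ ^ (γ i j k)).prod).prod = 1))
    ↔ (∃ x : Fin m → ℤ,
        ∀ i, α i + (∑ j, β i j * x j) + (∑ j, ∑ k, γ i j k * x j * x k) = 0) := by
  set a := FreeNilpotent.gen 2 q ⟨0, h0⟩ with ha
  set b := FreeNilpotent.gen 2 q ⟨1, h1⟩ with hb
  have hc : ∀ u v w : FreeNilpotent 2 q, Commute ⁅u, v⁆ w := comm_commute q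
  constructor
  · rintro ⟨y, y', hcon, heq⟩
    set Z : Heis := Heis.mk 0 0 1 with hZ
    have hZp : ∀ s : ℤ, Z ^ s = Heis.mk 0 0 s := fun s => by
      rw [hZ, Heis.zeta_zpow, mul_one]
    have hφa : phi q a = Heis.mk 1 0 0 := by rw [ha, phi_gen]; norm_num
    have hφb : phi q b = Heis.mk 0 1 0 := by rw [hb, phi_gen]; norm_num
    have hu2 : ∀ j, Heis.x2 (phi q (y j)) = 0 := fun j => by
      have h := congrArg (phi q) (hcon j).1
      rw [map_commutatorElement, map_one, hφa, Heis.comm_def] at h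
      have h3 := congrArg Heis.x3 h
      simpa using h3
    have hv1 : ∀ j, Heis.x1 (phi q (y' j)) = 0 := fun j => by
      have h := congrArg (phi q) (hcon j).2.1
      rw [map_commutatorElement, map_one, hφb, Heis.comm_def] at h
      have h3 := congrArg Heis.x3 h
      simp at h3
      omega
    have hv2 : ∀ j, Heis.x2 (phi q (y' j)) = Heis.x1 (phi q (y j)) := fun j => by
      have h := congrArg (phi q) (hcon j).2.2
      rw [map_commutatorElement, map_commutatorElement, hφa, hφb,
        Heis.comm_def, Heis.comm_def] at h
      have h3 := congrArg Heis.x3 h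
      simp at h3
      omega
    refine ⟨fun j => Heis.x1 (phi q (y j)), fun i => ?_⟩
    have hE := congrArg (phi q) (heq i)
    rw [map_one, map_mul, map_mul, map_zpow, map_commutatorElement, hφa, hφb,
      map_list_prod, map_list_prod, List.map_ofFn, List.map_ofFn] at hE
    have e0 : ⁅Heis.mk 1 0 0, Heis.mk 0 1 0⁆ ^ (α i) = Z ^ (α i) := by
      rw [Heis.comm_def]
      norm_num
      rfl
    have f1 : (List.ofFn ((phi q) ∘ fun j => ⁅a, y' j⁆ ^ β i j)).prod
        = Z ^ (∑ j, β i j * Heis.x1 (phi q (y j))) := by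
      rw [show ((phi q) ∘ fun j => ⁅a, y' j⁆ ^ β i j)
          = fun j => Z ^ (β i j * Heis.x1 (phi q (y j))) from funext fun j => by
        simp only [Function.comp_apply, map_zpow, map_commutatorElement, hφa, Heis.comm_def,
          Heis.x1_mk, Heis.x2_mk, hv1 j, hv2 j]
        rw [show (1 * Heis.x1 (phi q (y j)) - 0 * 0 : ℤ) = Heis.x1 (phi q (y j)) from by ring,
          ← hZp, ← zpow_mul, mul_comm]]
      exact prod_ofFn_zpow Z _
    have f2 : (List.ofFn ((phi q) ∘ fun j => (List.ofFn fun k => ⁅y j, y' k⁆ ^ γ i j k).prod)).prod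
        = Z ^ (∑ j, ∑ k, γ i j k * Heis.x1 (phi q (y j)) * Heis.x1 (phi q (y k))) := by
      rw [show ((phi q) ∘ fun j => (List.ofFn fun k => ⁅y j, y' k⁆ ^ γ i j k).prod)
          = fun j => Z ^ (∑ k, γ i j k * Heis.x1 (phi q (y j)) * Heis.x1 (phi q (y k)))
          from funext fun j => by
        simp only [Function.comp_apply, map_list_prod, List.map_ofFn]
        rw [show ((phi q) ∘ fun k => ⁅y j, y' k⁆ ^ γ i j k)
            = fun k => Z ^ (γ i j k * Heis.x1 (phi q (y j)) * Heis.x1 (phi q (y k)))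
            from funext fun k => by
          simp only [Function.comp_apply, map_zpow, map_commutatorElement, Heis.comm_def,
            hv1 k, hv2 k, hu2 j]
          rw [show (Heis.x1 (phi q (y j)) * Heis.x1 (phi q (y k)) - 0 * 0 : ℤ)
              = Heis.x1 (phi q (y j)) * Heis.x1 (phi q (y k)) from by ring,
            ← hZp, ← zpow_mul,
            show Heis.x1 (phi q (y j)) * Heis.x1 (phi q (y k)) * γ i j k
              = γ i j k * Heis.x1 (phi q (y j)) * Heis.x1 (phi q (y k)) from by ring]]
        exact prod_ofFn_zpow Z _]
      exact prod_ofFn_zpow Z _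
    rw [e0, f1, f2, ← zpow_add, ← zpow_add, hZp] at hE
    have h3 := congrArg Heis.x3 hE
    simpa using h3
  · rintro ⟨x, hx⟩
    refine ⟨fun j => a ^ x j, fun j => b ^ x j, fun j => ⟨?_, ?_, ?_⟩, fun i => ?_⟩
    · exact commutatorElement_eq_one_iff_commute.mpr ((Commute.refl a).zpow_right _)
    · exact commutatorElement_eq_one_iff_commute.mpr ((Commute.refl b).zpow_right _)
    · rw [commutator_zpow_right b a (hc b a a) (x j), commutator_zpow_left b a (hc a b b) (x j)]
    · have hP1 : (List.ofFn fun j => ⁅a, b ^ x j⁆ ^ β i j).prod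
          = ⁅a, b⁆ ^ (∑ j, β i j * x j) := by
        rw [show (fun j => ⁅a, b ^ x j⁆ ^ β i j) = fun j => ⁅a, b⁆ ^ (β i j * x j)
            from funext fun j => by
          rw [commutator_zpow_right a b (hc a b b) (x j), ← zpow_mul, mul_comm]]
        exact prod_ofFn_zpow _ _
      have hP2 : (List.ofFn fun j => (List.ofFn fun k => ⁅a ^ x j, b ^ x k⁆ ^ γ i j k).prod).prod
          = ⁅a, b⁆ ^ (∑ j, ∑ k, γ i j k * x j * x k) := by
        rw [show (fun j => (List.ofFn fun k => ⁅a ^ x j, b ^ x k⁆ ^ γ i j k).prod)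
            = fun j => ⁅a, b⁆ ^ (∑ k, γ i j k * x j * x k) from funext fun j => by
          rw [show (fun k => ⁅a ^ x j, b ^ x k⁆ ^ γ i j k)
              = fun k => ⁅a, b⁆ ^ (γ i j k * x j * x k) from funext fun k => by
            rw [commutator_zpow_zpow hc a b (x j) (x k), ← zpow_mul,
              show x j * x k * γ i j k = γ i j k * x j * x k from by ring]]
          exact prod_ofFn_zpow _ _]
        exact prod_ofFn_zpow _ _
      rw [hP1, hP2, ← zpow_add, ← zpow_add, hx i, zpow_zero]

/-- The system of group equations in `N(2,q)` encoding an arbitrary finite system of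
quadratic diophantine equations is solvable iff the diophantine system is.  Here
`a = a_1`, `b = a_2`.  (All the listed commutator factors lie in the central commutator
subgroup of `N(2,q)`, so the order of the products below is immaterial; we fix the order
given by increasing indices.) -/
theorem free_nilpotent_two_step_system_encodes_quadratic_system
    (q : ℕ) (hq : 2 ≤ q)
    (n m : ℕ) (α : Fin n → ℤ) (β : Fin n → Fin m → ℤ) (γ : Fin n → Fin m → Fin m → ℤ) :
    (∃ y y' : Fin m → FreeNilpotent 2 q,
      (∀ j, ⁅FreeNilpotent.gen 2 q ⟨0, by omega⟩, y j⁆ = 1 ∧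
            ⁅FreeNilpotent.gen 2 q ⟨1, by omega⟩, y' j⁆ = 1 ∧
            ⁅FreeNilpotent.gen 2 q ⟨1, by omega⟩, y j⁆ =
              ⁅y' j, FreeNilpotent.gen 2 q ⟨0, by omega⟩⁆) ∧
      (∀ i, ⁅FreeNilpotent.gen 2 q ⟨0, by omega⟩, FreeNilpotent.gen 2 q ⟨1, by omega⟩⁆ ^ (α i) *
        (List.ofFn fun j => ⁅FreeNilpotent.gen 2 q ⟨0, by omega⟩, y' j⁆ ^ (β i j)).prod *
        (List.ofFn fun j => (List.ofFn fun k => ⁅y j, y' k⁆ ^ (γ i j k)).prod).prod = 1))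
    ↔ (∃ x : Fin m → ℤ,
        ∀ i, α i + (∑ j, β i j * x j) + (∑ j, ∑ k, γ i j k * x j * x k) = 0) := by
  exact main_aux q (by omega) (by omega) n m α β γ
end

section
/- Let k ≥ 3 and let G be a group that is nilpotent of class at most k, i.e. lowerCentralSeries G k is the trivial subgroup. Then the k-fold left-nested commutator is multiplicative in its second-to-last argument: for all r_1, …, r_{k-2}, s, t, r ∈ G, ⁅r_1, r_2, …, r_{k-2}, s·t, r⁆ = ⁅r_1, r_2, …, r_{k-2}, s, r⁆ · ⁅r_1, r_2, …, r_{k-2}, t, r⁆, where ⁅x_1,…,x_n⁆ denotes the left-nested iterated commutator ⁅⁅…⁅⁅x_1,x_2⁆,x_3⁆,…⁆,x_n⁆. -/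
open scoped commutatorElement

open scoped commutatorElement in
/-- The left-nested iterated commutator `⁅x₁, …, xₙ⁆ = ⁅⁅…⁅⁅x₁,x₂⁆,x₃⁆,…⁆,xₙ⁆` of a list of
group elements (by convention `1` for the empty list, and `x` for the singleton list `[x]`). -/
def nestedCommutator {G : Type*} [Group G] : List G → G
  | [] => 1
  | x :: xs => xs.foldl (fun u v => ⁅u, v⁆) x

lemma foldl_comm_mem {G : Type*} [Group G] :
    ∀ (xs : List G) (m : ℕ) (x : G), x ∈ (⊤ : Subgroup G).lowerCentralSeries m →
      xs.foldl (fun u v => ⁅u, v⁆) x ∈ (⊤ : Subgroup G).lowerCentralSeries (m + xs.length)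
  | [], m, x, hx => by simpa using hx
  | v :: vs, m, x, hx => by
    have : ⁅x, v⁆ ∈ (⊤ : Subgroup G).lowerCentralSeries (m + 1) := by
      rw [Subgroup.lowerCentralSeries_succ]
      exact Subgroup.commutator_mem_commutator hx (Subgroup.mem_top v)
    simpa [Nat.add_assoc, Nat.add_comm 1] using foldl_comm_mem vs (m + 1) ⁅x, v⁆ this

lemma key {G : Type*} [Group G] (a w x r : G)
    (hw : ∀ g, w * g = g * w) (hX : ∀ g, ⁅x, r⁆ * g = g * ⁅x, r⁆) :
    ⁅a * w * x, r⁆ = ⁅a, r⁆ * ⁅x, r⁆ := by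
  have e1 : ∀ y, ⁅w * y, r⁆ = ⁅y, r⁆ := by
    intro y
    have h : w * y * r * (w * y)⁻¹ * r⁻¹ = w * (y * r * y⁻¹) * w⁻¹ * r⁻¹ := by group
    rw [commutatorElement_def, h, hw (y * r * y⁻¹), commutatorElement_def]
    group
  have haw : a * w * x = w * (a * x) := by rw [← hw]; group
  rw [haw, e1]
  have e2 : ⁅a * x, r⁆ = a * ⁅x, r⁆ * a⁻¹ * ⁅a, r⁆ := by
    simp only [commutatorElement_def]; group
  rw [e2, ← hX a, mul_inv_cancel_right, hX]

/-- In a group that is nilpotent of class at most `k` (`k ≥ 3`), the `k`-fold left-nested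
commutator is multiplicative in its second-to-last argument. -/
theorem nested_commutator_mul_second_to_last (k : ℕ) (hk : 3 ≤ k) (G : Type*) [Group G]
    (hG : (⊤ : Subgroup G).lowerCentralSeries k = ⊥) (r : Fin (k - 2) → G) (s t r' : G) :
    nestedCommutator (List.ofFn r ++ [s * t, r']) =
      nestedCommutator (List.ofFn r ++ [s, r']) *
        nestedCommutator (List.ofFn r ++ [t, r']) := by
  obtain ⟨n, rfl⟩ : ∃ n, k = n + 3 := ⟨k - 3, by omega⟩
  have hr : List.ofFn r = r ⟨0, by omega⟩ :: List.ofFn (fun i : Fin n => r i.succ) :=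
    List.ofFn_succ (f := r)
  set c : G := nestedCommutator (List.ofFn r) with hc
  have hcmem : c ∈ (⊤ : Subgroup G).lowerCentralSeries n := by
    have := foldl_comm_mem (G := G) (List.ofFn (fun i : Fin n => r i.succ)) 0 (r ⟨0, by omega⟩)
      (by simp)
    simpa [hc, hr, nestedCommutator] using this
  -- elements of (⊤ : Subgroup G).lowerCentralSeries (n+2) are central
  have hcent : ∀ z ∈ (⊤ : Subgroup G).lowerCentralSeries (n + 2), ∀ g : G, z * g = g * z := by
    intro z hz g
    have : ⁅z, g⁆ ∈ (⊤ : Subgroup G).lowerCentralSeries (n + 3) := by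
      rw [Subgroup.lowerCentralSeries_succ]
      exact Subgroup.commutator_mem_commutator hz (Subgroup.mem_top g)
    rw [hG, Subgroup.mem_bot, commutatorElement_eq_one_iff_mul_comm] at this
    exact this
  have hmem1 : ∀ u : G, ⁅c, u⁆ ∈ (⊤ : Subgroup G).lowerCentralSeries (n + 1) := fun u => by
    rw [Subgroup.lowerCentralSeries_succ]
    exact Subgroup.commutator_mem_commutator hcmem (Subgroup.mem_top u)
  have hmem2 : ∀ u v : G, ⁅⁅c, u⁆, v⁆ ∈ (⊤ : Subgroup G).lowerCentralSeries (n + 2) := fun u v => by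
    rw [Subgroup.lowerCentralSeries_succ]
    exact Subgroup.commutator_mem_commutator (hmem1 u) (Subgroup.mem_top v)
  have hsw : ∀ u v : G, ⁅u, ⁅c, v⁆⁆ ∈ (⊤ : Subgroup G).lowerCentralSeries (n + 2) := fun u v => by
    have := (hmem2 v u)
    simpa using ((⊤ : Subgroup G).lowerCentralSeries (n + 2)).inv_mem this
  -- reduce nestedCommutator to iterated commutators of c
  have hred : ∀ x y : G, nestedCommutator (List.ofFn r ++ [x, y]) = ⁅⁅c, x⁆, y⁆ := by
    intro x y
    rw [hr]
    simp [nestedCommutator, List.foldl_append, ← hr, hc]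
  rw [hred, hred, hred]
  have hA : ⁅c, s * t⁆ = ⁅c, s⁆ * ⁅s, ⁅c, t⁆⁆ * ⁅c, t⁆ := by
    simp only [commutatorElement_def]; group
  rw [hA]
  exact key _ _ _ _ (hcent _ (hsw s t)) (hcent _ (hmem2 t r'))
end
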